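/- Let p ≡ 1 (mod 4) be prime and t ∈ ℤ/pℤ, t ≠ 0. Then {N(1+β) : β ∈ ℤ[i]/pℤ[i], N(β) = t} = {x⁻¹(x+1)(x+t) : x ∈ ℤ/pℤ, x ≠ 0}. -/

import Mathlib

/-- The ring `ℤ[i]/pℤ[i]`, modeled as pairs `(a, b)` over `ℤ/pℤ` representing `a + bi`. -/
abbrev R (p : ℕ) := ZMod p × ZMod p

def Gnorm {p : ℕ} (β : R p) : ZMod p := β.1 ^ 2 + β.2 ^ 2

/-!
If `r² = -1`, the coordinates `u = a + r b`, `v = a - r b` split the norm as `N(a + bi) = u v`,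
and `N(1 + β) = (u + 1)(v + 1)`; when `2` is invertible every pair `(u, v)` arises. So the values
`N(1 + β)` with `N(β) = t` are the `(u + 1)(t / u + 1) = u⁻¹(u + 1)(u + t)` with `u ≠ 0`.
-/

section Field

variable {K : Type*} [Field K]

theorem exists_add_mul_eq_and_sub_mul_eq {r : K} (hr : r ^ 2 = -1) (h2 : (2 : K) ≠ 0)
    (u v : K) : ∃ a b : K, a + r * b = u ∧ a - r * b = v :=
  ⟨(u + v) / 2, -r * (u - v) / 2,
    by field_simp; linear_combination (v - u) * hr,
    by field_simp; linear_combination (u - v) * hr⟩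

theorem setOf_add_one_mul_add_one_eq {t : K} (ht : t ≠ 0) :
    {c : K | ∃ u v : K, u * v = t ∧ (u + 1) * (v + 1) = c} =
      {c : K | ∃ x : K, x ≠ 0 ∧ c = x⁻¹ * (x + 1) * (x + t)} := by
  ext c
  constructor
  · rintro ⟨u, v, rfl, rfl⟩
    have hu : u ≠ 0 := left_ne_zero_of_mul ht
    exact ⟨u, hu, by field_simp; ring⟩
  · rintro ⟨x, hx, rfl⟩
    exact ⟨x, x⁻¹ * t, by field_simp, by field_simp; ring⟩

end Field

section GaussianNorm

variable {p : ℕ} {r : ZMod p}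

theorem Gnorm_eq_mul (hr : r ^ 2 = -1) (β : R p) :
    Gnorm β = (β.1 + r * β.2) * (β.1 - r * β.2) := by
  unfold Gnorm
  linear_combination β.2 ^ 2 * hr

theorem Gnorm_one_add (hr : r ^ 2 = -1) (β : R p) :
    Gnorm (((1 : ZMod p), (0 : ZMod p)) + β) = (β.1 + r * β.2 + 1) * (β.1 - r * β.2 + 1) := by
  rw [Gnorm_eq_mul hr]
  simp only [Prod.fst_add, Prod.snd_add, zero_add]
  ring

theorem setOf_Gnorm_one_add_eq [Fact p.Prime] (hr : r ^ 2 = -1) (h2 : (2 : ZMod p) ≠ 0)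
    (t : ZMod p) :
    {c : ZMod p | ∃ β : R p, Gnorm β = t ∧ Gnorm (((1 : ZMod p), (0 : ZMod p)) + β) = c} =
      {c : ZMod p | ∃ u v : ZMod p, u * v = t ∧ (u + 1) * (v + 1) = c} := by
  ext c
  simp only [Set.mem_ofPred_eq, Gnorm_one_add hr, Gnorm_eq_mul hr]
  constructor
  · rintro ⟨β, hβ, hc⟩
    exact ⟨_, _, hβ, hc⟩
  · rintro ⟨u, v, huv, hc⟩
    obtain ⟨a, b, rfl, rfl⟩ := exists_add_mul_eq_and_sub_mul_eq hr h2 u v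
    exact ⟨(a, b), huv, hc⟩

end GaussianNorm

/-- For `p ≡ 1 (mod 4)` prime and `t ≠ 0` in `ℤ/pℤ`,
`{N(1+β) : N(β) = t} = {x⁻¹(x+1)(x+t) : x ≠ 0}`. -/
theorem Np_polynomial (p : ℕ) (hp : p.Prime) (hmod : p % 4 = 1) (t : ZMod p) (ht : t ≠ 0) :
    {c : ZMod p | ∃ β : R p, Gnorm β = t ∧ Gnorm (((1 : ZMod p), (0 : ZMod p)) + β) = c} =
      {c : ZMod p | ∃ x : ZMod p, x ≠ 0 ∧ c = x⁻¹ * (x + 1) * (x + t)} := by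
  have : Fact p.Prime := ⟨hp⟩
  obtain ⟨r, hr⟩ : ∃ r : ZMod p, r ^ 2 = -1 := by
    obtain ⟨r, hr⟩ := ZMod.exists_sq_eq_neg_one_iff.mpr (by omega : p % 4 ≠ 3)
    exact ⟨r, by rw [sq, hr]⟩
  have h2 : (2 : ZMod p) ≠ 0 := Ring.two_ne_zero (by rw [ZMod.ringChar_zmod_n]; omega)
  rw [setOf_Gnorm_one_add_eq hr h2, setOf_add_one_mul_add_one_eq ht]
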